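/- Interpolation error for subinterval averages (scalar Poincaré version): for v ∈ W^{s,p}(0,T) with s ∈ (1/p,1], p ∈ (1,∞), t_n = nτ, Nτ = T, and v̄^n = τ^{-1}∫_{t_{n-1}}^{t_n} v, there holds (τ Σ_{n=1}^N |v(t_n) − v̄^n|^p)^{1/p} ≤ c τ^s |v|_{W^{s,p}(0,T)}, where |·|_{W^{s,p}} is the Gagliardo seminorm. -/

import Mathlib

/-!
On a single cell `(a, b]`, compare the averages of `v` over the dyadic intervals `(b - h, b]` and
`(b - h/2, b]`: their difference is the average of `v x - v y` over the product of the two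
intervals, so Jensen's inequality and `|x - y| ≤ h` bound it by
`2^(1/p) h^(s - 1/p) |v|_{W^{s,p}(a,b)}`. As `s > 1/p` these bounds form a convergent geometric
series, while the dyadic averages tend to `v b` by continuity; this gives the fractional Poincaré
inequality `|v b - ⨍_{(a,b]} v| ≤ C (b - a)^(s - 1/p) |v|_{W^{s,p}(a,b)}`. Raise it to the power `p`
on every cell `((n-1)τ, nτ]` and sum: the diagonal squares of distinct cells are disjoint, so
their seminorms add up to at most the global one.
-/

open Real MeasureTheory Finset Function

noncomputable def gagliardoIntegrand (p s : ℝ) (v : ℝ → ℝ) (q : ℝ × ℝ) : ℝ :=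
  |v q.1 - v q.2| ^ p / |q.1 - q.2| ^ (1 + p * s)

lemma gagliardoIntegrand_nonneg (p s : ℝ) (v : ℝ → ℝ) (q : ℝ × ℝ) :
    0 ≤ gagliardoIntegrand p s v q :=
  div_nonneg (rpow_nonneg (abs_nonneg _) _) (rpow_nonneg (abs_nonneg _) _)

lemma abs_sub_rpow_le_gagliardoIntegrand_mul {p s δ : ℝ} (hp : 0 < p) (hps : 0 ≤ 1 + p * s)
    (v : ℝ → ℝ) {x y : ℝ} (hxy : |x - y| ≤ δ) :
    |v x - v y| ^ p ≤ gagliardoIntegrand p s v (x, y) * δ ^ (1 + p * s) := by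
  rcases eq_or_ne x y with rfl | hne
  · rw [sub_self, abs_zero, zero_rpow hp.ne']
    exact mul_nonneg (gagliardoIntegrand_nonneg ..) (rpow_nonneg ((abs_nonneg _).trans hxy) _)
  · have hpos : 0 < |x - y| ^ (1 + p * s) := rpow_pos_of_pos (abs_pos.2 (sub_ne_zero.2 hne)) _
    calc |v x - v y| ^ p = gagliardoIntegrand p s v (x, y) * |x - y| ^ (1 + p * s) :=
          (div_mul_cancel₀ _ hpos.ne').symm
      _ ≤ _ := by
          gcongr
          exact gagliardoIntegrand_nonneg ..

section Average

variable {α β E : Type*} [MeasurableSpace α] [MeasurableSpace β] {μ : Measure α} {ν : Measure β}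
  [NormedAddCommGroup E] [NormedSpace ℝ E]

lemma average_prod_sub [IsFiniteMeasure μ] [IsFiniteMeasure ν] [NeZero μ] [NeZero ν]
    {f : α → E} {g : β → E} (hf : Integrable f μ) (hg : Integrable g ν) :
    ⨍ z, f z.1 - g z.2 ∂μ.prod ν = ⨍ x, f x ∂μ - ⨍ y, g y ∂ν := by
  have hμ := (measureReal_univ_pos (μ := μ)).ne'
  have hν := (measureReal_univ_pos (μ := ν)).ne'
  rw [average_eq, integral_sub (hf.comp_fst ν) (hg.comp_snd μ), integral_fun_fst,
    integral_fun_snd, average_eq, average_eq, measureReal_def, ← Set.univ_prod_univ,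
    Measure.prod_prod, ENNReal.toReal_mul, ← measureReal_def, ← measureReal_def, smul_sub,
    smul_smul, smul_smul]
  congr 2 <;> field_simp

lemma abs_average_rpow_le [IsFiniteMeasure μ] [NeZero μ] {p : ℝ} (hp : 1 ≤ p) {G : α → ℝ}
    (hG : Integrable G μ) (hGp : Integrable (fun x ↦ |G x| ^ p) μ) :
    |⨍ x, G x ∂μ| ^ p ≤ ⨍ x, |G x| ^ p ∂μ := by
  calc |⨍ x, G x ∂μ| ^ p ≤ (⨍ x, |G x| ∂μ) ^ p := by
        rw [average_eq, average_eq, smul_eq_mul, smul_eq_mul, abs_mul,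
          abs_of_pos (inv_pos.2 measureReal_univ_pos)]
        gcongr
        exact abs_integral_le_integral_abs
    _ ≤ ⨍ x, |G x| ^ p ∂μ :=
        (convexOn_rpow hp).map_average_le
          (continuousOn_id.rpow_const fun _ _ ↦ Or.inr (by linarith)) isClosed_Ici
          (.of_forall fun x ↦ abs_nonneg (G x)) hG.abs hGp

end Average

lemma abs_setAverage_sub_setAverage_rpow_le {p s δ : ℝ} (hp : 1 ≤ p) (hps : 0 ≤ 1 + p * s)
    {v : ℝ → ℝ} {X Y : Set ℝ} (hXm : MeasurableSet X) (hYm : MeasurableSet Y)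
    (hX0 : volume X ≠ 0) (hX : volume X ≠ ⊤) (hY0 : volume Y ≠ 0) (hY : volume Y ≠ ⊤)
    (hvX : IntegrableOn v X) (hvY : IntegrableOn v Y)
    (hf : IntegrableOn (gagliardoIntegrand p s v) (X ×ˢ Y))
    (hδ : ∀ x ∈ X, ∀ y ∈ Y, |x - y| ≤ δ) :
    |(⨍ x in X, v x) - ⨍ y in Y, v y| ^ p ≤
      δ ^ (1 + p * s) / (volume.real X * volume.real Y) *
        ∫ q in X ×ˢ Y, gagliardoIntegrand p s v q := by
  have : IsFiniteMeasure (volume.restrict X) := isFiniteMeasure_restrict.2 hX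
  have : IsFiniteMeasure (volume.restrict Y) := isFiniteMeasure_restrict.2 hY
  have : NeZero (volume.restrict X) := ⟨Measure.restrict_eq_zero.not.2 hX0⟩
  have : NeZero (volume.restrict Y) := ⟨Measure.restrict_eq_zero.not.2 hY0⟩
  set μ := (volume.restrict X).prod (volume.restrict Y)
  have hμ : μ = volume.restrict (X ×ˢ Y) := by
    rw [show μ = _ from Measure.prod_restrict X Y, ← Measure.volume_eq_prod]
  have hμuniv : μ.real Set.univ = volume.real X * volume.real Y := by
    simp only [μ, measureReal_def, ← Set.univ_prod_univ, Measure.prod_prod,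
      Measure.restrict_apply_univ, ENNReal.toReal_mul]
  have : NeZero μ := ⟨fun h ↦ by
    simp only [h, measureReal_zero_apply] at hμuniv
    exact mul_ne_zero (ENNReal.toReal_pos hX0 hX).ne' (ENNReal.toReal_pos hY0 hY).ne' hμuniv.symm⟩
  set G : ℝ × ℝ → ℝ := fun q ↦ v q.1 - v q.2
  have hG : Integrable G μ := (hvX.comp_fst _).sub (hvY.comp_snd _)
  have hbound : ∀ᵐ q ∂μ, |G q| ^ p ≤ gagliardoIntegrand p s v q * δ ^ (1 + p * s) := by
    rw [hμ]
    filter_upwards [ae_restrict_mem (hXm.prod hYm)] with q hq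
    exact abs_sub_rpow_le_gagliardoIntegrand_mul (by linarith) hps v (hδ _ hq.1 _ hq.2)
  have hfμ : Integrable (fun q ↦ gagliardoIntegrand p s v q * δ ^ (1 + p * s)) μ := by
    rw [hμ]; exact hf.mul_const _
  have hGp : Integrable (fun q ↦ |G q| ^ p) μ :=
    hfμ.mono' (hG.aestronglyMeasurable.aemeasurable.abs.pow_const p).aestronglyMeasurable
      (hbound.mono fun q hq ↦ by rwa [Real.norm_of_nonneg (rpow_nonneg (abs_nonneg _) _)])
  calc |(⨍ x in X, v x) - ⨍ y in Y, v y| ^ p = |⨍ q, G q ∂μ| ^ p := by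
        rw [average_prod_sub hvX hvY]
    _ ≤ ⨍ q, |G q| ^ p ∂μ := abs_average_rpow_le hp hG hGp
    _ ≤ ⨍ q, gagliardoIntegrand p s v q * δ ^ (1 + p * s) ∂μ := by
        rw [average_eq, average_eq, smul_eq_mul, smul_eq_mul]
        exact mul_le_mul_of_nonneg_left (integral_mono_ae hGp hfμ hbound)
          (inv_nonneg.2 measureReal_nonneg)
    _ = _ := by
        rw [average_eq, hμuniv, integral_mul_const, hμ, smul_eq_mul]
        ring

lemma abs_setAverage_Ioc_sub_setAverage_Ioc_half_rpow_le {p s : ℝ} (hp : 1 ≤ p)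
    (hps : 0 ≤ 1 + p * s) {v : ℝ → ℝ} {b h : ℝ} (hh : 0 < h)
    (hv : IntegrableOn v (Set.Ioc (b - h) b))
    (hf : IntegrableOn (gagliardoIntegrand p s v) (Set.Ioc (b - h) b ×ˢ Set.Ioc (b - h) b)) :
    |(⨍ x in Set.Ioc (b - h) b, v x) - ⨍ y in Set.Ioc (b - h / 2) b, v y| ^ p ≤
      2 * h ^ (p * s - 1) * ∫ q in Set.Ioc (b - h) b ×ˢ Set.Ioc (b - h) b,
        gagliardoIntegrand p s v q := by
  have hsub : Set.Ioc (b - h / 2) b ⊆ Set.Ioc (b - h) b := Set.Ioc_subset_Ioc (by linarith) le_rfl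
  have hprod := Set.prod_mono (subset_refl (Set.Ioc (b - h) b)) hsub
  have hcoef : h ^ (1 + p * s) / (volume.real (Set.Ioc (b - h) b) *
      volume.real (Set.Ioc (b - h / 2) b)) = 2 * h ^ (p * s - 1) := by
    rw [volume_real_Ioc_of_le (by linarith), volume_real_Ioc_of_le (by linarith),
      show 1 + p * s = (p * s - 1) + 2 by ring, rpow_add hh, rpow_two,
      show b - (b - h) = h by ring, show b - (b - h / 2) = h / 2 by ring]
    field_simp
  calc _ ≤ h ^ (1 + p * s) / (volume.real (Set.Ioc (b - h) b) *
          volume.real (Set.Ioc (b - h / 2) b)) *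
        ∫ q in Set.Ioc (b - h) b ×ˢ Set.Ioc (b - h / 2) b, gagliardoIntegrand p s v q := by
        refine abs_setAverage_sub_setAverage_rpow_le hp hps measurableSet_Ioc measurableSet_Ioc
          ?_ measure_Ioc_lt_top.ne ?_ measure_Ioc_lt_top.ne hv (hv.mono_set hsub)
          (hf.mono_set hprod) fun x hx y hy ↦ abs_le.2 ⟨?_, ?_⟩
        · simp [Real.volume_Ioc, hh]
        · simp [Real.volume_Ioc, hh]
        · linarith [hx.1, hy.2]
        · linarith [hx.2, hy.1]
    _ ≤ _ := by
        rw [hcoef]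
        exact mul_le_mul_of_nonneg_left (setIntegral_mono_set hf
          (.of_forall (gagliardoIntegrand_nonneg p s v)) hprod.eventuallyLE) (by positivity)

lemma abs_setAverage_Ioc_sub_setAverage_Ioc_half_le {p s : ℝ} (hp : 1 ≤ p)
    (hps : 0 ≤ 1 + p * s) {v : ℝ → ℝ} {a b h : ℝ} (hh : 0 < h) (ha : a ≤ b - h)
    (hv : IntegrableOn v (Set.Ioc (b - h) b))
    (hf : IntegrableOn (gagliardoIntegrand p s v) (Set.Ioc a b ×ˢ Set.Ioc a b)) :
    |(⨍ x in Set.Ioc (b - h) b, v x) - ⨍ y in Set.Ioc (b - h / 2) b, v y| ≤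
      2 ^ (1 / p) * h ^ (s - 1 / p) *
        (∫ q in Set.Ioc a b ×ˢ Set.Ioc a b, gagliardoIntegrand p s v q) ^ (1 / p) := by
  set A := ∫ q in Set.Ioc a b ×ˢ Set.Ioc a b, gagliardoIntegrand p s v q
  have hp0 : 0 < p := by linarith
  have hA : 0 ≤ A := setIntegral_nonneg_of_ae (.of_forall (gagliardoIntegrand_nonneg p s v))
  have hprod : Set.Ioc (b - h) b ×ˢ Set.Ioc (b - h) b ⊆ Set.Ioc a b ×ˢ Set.Ioc a b :=
    Set.prod_mono (Set.Ioc_subset_Ioc ha le_rfl) (Set.Ioc_subset_Ioc ha le_rfl)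
  have hpow := (abs_setAverage_Ioc_sub_setAverage_Ioc_half_rpow_le hp hps hh hv
    (hf.mono_set hprod)).trans (mul_le_mul_of_nonneg_left (setIntegral_mono_set hf
      (.of_forall (gagliardoIntegrand_nonneg p s v)) hprod.eventuallyLE) (by positivity))
  calc _ ≤ (2 * h ^ (p * s - 1) * A) ^ (1 / p) := by
        rw [one_div]
        exact (le_rpow_inv_iff_of_pos (abs_nonneg _) (by positivity) hp0).2 hpow
    _ = _ := by
        rw [mul_rpow (by positivity) hA, mul_rpow zero_le_two (by positivity), ← rpow_mul hh.le]
        congr 3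
        field_simp

lemma ContinuousOn.tendsto_setAverage_Ioc {ι : Type*} {l : Filter ι} {v : ℝ → ℝ}
    {a b : ℝ} (hab : a ≤ b) (hv : ContinuousOn v (Set.Icc a b)) {ℓ : ι → ℝ} (hℓ0 : ∀ i, 0 < ℓ i)
    (hℓa : ∀ i, ℓ i ≤ b - a) (hℓ : Filter.Tendsto ℓ l (nhds 0)) :
    Filter.Tendsto (fun i ↦ ⨍ x in Set.Ioc (b - ℓ i) b, v x) l (nhds (v b)) := by
  have hsub : ∀ i, Set.Ioc (b - ℓ i) b ⊆ Set.Icc a b := fun i ↦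
    Set.Ioc_subset_Icc_self.trans (Set.Icc_subset_Icc (by linarith [hℓa i]) le_rfl)
  rw [Metric.nhds_basis_closedBall.tendsto_right_iff]
  intro ε hε
  obtain ⟨δ, hδ, hvδ⟩ := Metric.continuousWithinAt_iff.1
    (hv b (Set.right_mem_Icc.2 hab)) ε hε
  filter_upwards [hℓ.eventually (gt_mem_nhds hδ)] with i hi
  refine (convex_closedBall _ _).set_average_mem Metric.isClosed_closedBall
    (by simp [Real.volume_Ioc, hℓ0 i]) measure_Ioc_lt_top.ne ?_
    ((hv.integrableOn_Icc).mono_set (hsub i))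
  filter_upwards [ae_restrict_mem measurableSet_Ioc] with x hx
  refine Metric.mem_closedBall.2 (hvδ (hsub i hx) ?_).le
  rw [Real.dist_eq, abs_lt]
  constructor <;> linarith [hx.1, hx.2]

lemma div_two_pow_rpow {h : ℝ} (hh : 0 ≤ h) (σ : ℝ) (k : ℕ) :
    (h / 2 ^ k) ^ σ = h ^ σ * ((2 : ℝ) ^ (-σ)) ^ k := by
  rw [div_rpow hh (by positivity), rpow_neg zero_le_two, inv_pow, ← rpow_pow_comm zero_le_two,
    div_eq_mul_inv]

-- `2^(1/p) ∑ₖ (2^(1/p - s))^k`, the sum of the dyadic steps.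
noncomputable def poincareConstant (p s : ℝ) : ℝ := 2 ^ (1 / p) / (1 - 2 ^ (1 / p - s))

lemma poincareConstant_pos {p s : ℝ} (hs : 1 / p < s) : 0 < poincareConstant p s :=
  div_pos (by positivity) (sub_pos.2 (rpow_lt_one_of_one_lt_of_neg one_lt_two (by linarith)))

lemma abs_sub_setAverage_Ioc_le {p s : ℝ} (hp : 1 ≤ p) (hs : 1 / p < s) {v : ℝ → ℝ} {a b : ℝ}
    (hab : a < b) (hv : ContinuousOn v (Set.Icc a b))
    (hf : IntegrableOn (gagliardoIntegrand p s v) (Set.Ioc a b ×ˢ Set.Ioc a b)) :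
    |v b - ⨍ x in Set.Ioc a b, v x| ≤ poincareConstant p s * (b - a) ^ (s - 1 / p) *
        (∫ q in Set.Ioc a b ×ˢ Set.Ioc a b, gagliardoIntegrand p s v q) ^ (1 / p) := by
  have hps : 0 ≤ 1 + p * s := by
    have : 0 < s := lt_trans (by positivity) hs
    positivity
  set A := ∫ q in Set.Ioc a b ×ˢ Set.Ioc a b, gagliardoIntegrand p s v q
  set ℓ : ℕ → ℝ := fun k ↦ (b - a) / 2 ^ k
  have hℓ0 : ∀ k, 0 < ℓ k := fun k ↦ div_pos (sub_pos.2 hab) (by positivity)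
  have hℓa : ∀ k, ℓ k ≤ b - a := fun k ↦ div_le_self (sub_pos.2 hab).le (one_le_pow₀ one_le_two)
  have hℓ : Filter.Tendsto ℓ Filter.atTop (nhds 0) := by
    simpa [ℓ, div_eq_mul_inv] using
      (tendsto_inv_atTop_zero.comp (tendsto_pow_atTop_atTop_of_one_lt one_lt_two)).const_mul (b - a)
  have hsub : ∀ k, Set.Ioc (b - ℓ k) b ⊆ Set.Ioc a b := fun k ↦
    Set.Ioc_subset_Ioc (by linarith [hℓa k]) le_rfl
  have hstep : ∀ k, dist (⨍ x in Set.Ioc (b - ℓ k) b, v x) (⨍ x in Set.Ioc (b - ℓ (k + 1)) b, v x)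
      ≤ 2 ^ (1 / p) * (b - a) ^ (s - 1 / p) * A ^ (1 / p) * (2 ^ (1 / p - s)) ^ k := by
    intro k
    have hhalf : ℓ (k + 1) = ℓ k / 2 := by simp only [ℓ]; rw [pow_succ, div_div]
    rw [Real.dist_eq, hhalf]
    refine (abs_setAverage_Ioc_sub_setAverage_Ioc_half_le hp hps (hℓ0 k)
      (by linarith [hℓa k])
      ((hv.integrableOn_Icc).mono_set ((hsub k).trans Set.Ioc_subset_Icc_self)) hf).trans (le_of_eq ?_)
    rw [show ℓ k = (b - a) / 2 ^ k from rfl, div_two_pow_rpow (sub_pos.2 hab).le, neg_sub]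
    ring
  have hr : (2 : ℝ) ^ (1 / p - s) < 1 := rpow_lt_one_of_one_lt_of_neg one_lt_two (by linarith)
  have := dist_le_of_le_geometric_of_tendsto₀ _ _ hr hstep
    (hv.tendsto_setAverage_Ioc hab.le hℓ0 hℓa hℓ)
  simp only [ℓ, pow_zero, div_one, sub_sub_cancel] at this
  rw [abs_sub_comm, ← Real.dist_eq]
  calc _ ≤ _ := this
    _ = _ := by rw [poincareConstant]; ring

lemma abs_sub_setAverage_Ioc_rpow_le {p s : ℝ} (hp : 1 ≤ p) (hs : 1 / p < s) {v : ℝ → ℝ}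
    {a b : ℝ} (hab : a < b) (hv : ContinuousOn v (Set.Icc a b))
    (hf : IntegrableOn (gagliardoIntegrand p s v) (Set.Ioc a b ×ˢ Set.Ioc a b)) :
    |v b - ⨍ x in Set.Ioc a b, v x| ^ p ≤ poincareConstant p s ^ p * (b - a) ^ (p * s - 1) *
        ∫ q in Set.Ioc a b ×ˢ Set.Ioc a b, gagliardoIntegrand p s v q := by
  have hp0 : 0 < p := by linarith
  have hA : 0 ≤ ∫ q in Set.Ioc a b ×ˢ Set.Ioc a b, gagliardoIntegrand p s v q :=
    setIntegral_nonneg_of_ae (.of_forall (gagliardoIntegrand_nonneg p s v))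
  have hc := (poincareConstant_pos hs).le
  calc _ ≤ (poincareConstant p s * (b - a) ^ (s - 1 / p) *
        (∫ q in Set.Ioc a b ×ˢ Set.Ioc a b, gagliardoIntegrand p s v q) ^ (1 / p)) ^ p := by
        gcongr
        exact abs_sub_setAverage_Ioc_le hp hs hab hv hf
    _ = _ := by
        rw [mul_rpow (by positivity) (by positivity), mul_rpow hc (by positivity),
          ← rpow_mul (sub_pos.2 hab).le, ← rpow_mul hA, one_div_mul_cancel hp0.ne', rpow_one]
        congr 3
        field_simp

lemma sum_setIntegral_le_setIntegral {ι α : Type*} [MeasurableSpace α] {μ : Measure α}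
    {f : α → ℝ} {S : Set α} {t : Finset ι} {A : ι → Set α} (hf : IntegrableOn f S μ)
    (hf0 : 0 ≤ᵐ[μ.restrict S] f) (hAm : ∀ i ∈ t, MeasurableSet (A i)) (hAS : ∀ i ∈ t, A i ⊆ S)
    (hA : Set.Pairwise ↑t (Disjoint on A)) :
    ∑ i ∈ t, ∫ x in A i, f x ∂μ ≤ ∫ x in S, f x ∂μ := by
  rw [← integral_biUnion_finset t hAm hA fun i hi ↦ hf.mono_set (hAS i hi)]
  exact setIntegral_mono_set hf hf0 (Set.iUnion₂_subset hAS).eventuallyLE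

lemma pairwise_disjoint_Ioc_sub_one_mul {τ : ℝ} (hτ : 0 ≤ τ) :
    Pairwise (Disjoint on fun n : ℕ ↦ Set.Ioc (((n : ℝ) - 1) * τ) (n * τ)) := by
  refine (pairwise_disjoint_on _).2 fun m n hmn ↦ Set.Ioc_disjoint_Ioc_of_le ?_
  have : (m : ℝ) + 1 ≤ n := by exact_mod_cast hmn
  nlinarith

lemma setAverage_Ioc_eq {a b : ℝ} (hab : a ≤ b) (f : ℝ → ℝ) :
    ⨍ x in Set.Ioc a b, f x = 1 / (b - a) * ∫ x in Set.Ioc a b, f x := by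
  rw [setAverage_eq, volume_real_Ioc_of_le hab, smul_eq_mul, one_div]

lemma sum_abs_sub_setAverage_Ioc_rpow_le {p s : ℝ} (hp : 1 ≤ p) (hs : 1 / p < s) {τ : ℝ}
    (hτ : 0 < τ) (N : ℕ) {v : ℝ → ℝ} (hv : ContinuousOn v (Set.Icc 0 (N * τ)))
    (hf : IntegrableOn (gagliardoIntegrand p s v) (Set.Ioc 0 (N * τ) ×ˢ Set.Ioc 0 (N * τ))) :
    τ * ∑ n ∈ Finset.Icc 1 N, |v (n * τ) - ⨍ x in Set.Ioc (((n : ℝ) - 1) * τ) (n * τ), v x| ^ p ≤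
      poincareConstant p s ^ p * τ ^ (p * s) *
        ∫ q in Set.Ioc 0 (N * τ) ×ˢ Set.Ioc 0 (N * τ), gagliardoIntegrand p s v q := by
  set c := poincareConstant p s
  set I : ℕ → Set ℝ := fun n ↦ Set.Ioc (((n : ℝ) - 1) * τ) (n * τ)
  have hbounds : ∀ n ∈ Finset.Icc 1 N, 0 ≤ ((n : ℝ) - 1) * τ ∧ (n : ℝ) * τ ≤ N * τ := by
    intro n hn
    obtain ⟨h1, h2⟩ := Finset.mem_Icc.1 hn
    have h1 : (1 : ℝ) ≤ n := by exact_mod_cast h1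
    exact ⟨by nlinarith, mul_le_mul_of_nonneg_right (Nat.cast_le.2 h2) hτ.le⟩
  have hIoc : ∀ n ∈ Finset.Icc 1 N, I n ⊆ Set.Ioc 0 (N * τ) :=
    fun n hn ↦ Set.Ioc_subset_Ioc (hbounds n hn).1 (hbounds n hn).2
  have hcell : ∀ n ∈ Finset.Icc 1 N, |v (n * τ) - ⨍ x in I n, v x| ^ p ≤
      c ^ p * τ ^ (p * s - 1) * ∫ q in I n ×ˢ I n, gagliardoIntegrand p s v q := by
    intro n hn
    have := abs_sub_setAverage_Ioc_rpow_le hp hs (by linarith : ((n : ℝ) - 1) * τ < n * τ)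
      (hv.mono (Set.Icc_subset_Icc (hbounds n hn).1 (hbounds n hn).2))
      (hf.mono_set (Set.prod_mono (hIoc n hn) (hIoc n hn)))
    rwa [show (n : ℝ) * τ - ((n : ℝ) - 1) * τ = τ by ring] at this
  have hcells : ∑ n ∈ Finset.Icc 1 N, ∫ q in I n ×ˢ I n, gagliardoIntegrand p s v q ≤
      ∫ q in Set.Ioc 0 (N * τ) ×ˢ Set.Ioc 0 (N * τ), gagliardoIntegrand p s v q :=
    sum_setIntegral_le_setIntegral hf (.of_forall (gagliardoIntegrand_nonneg p s v))
      (fun _ _ ↦ measurableSet_Ioc.prod measurableSet_Ioc)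
      (fun n hn ↦ Set.prod_mono (hIoc n hn) (hIoc n hn))
      fun m _ n _ hmn ↦ Set.disjoint_prod.2 (.inl (pairwise_disjoint_Ioc_sub_one_mul hτ.le hmn))
  have hc : 0 ≤ c ^ p * τ ^ (p * s) :=
    mul_nonneg (rpow_nonneg (poincareConstant_pos hs).le _) (rpow_nonneg hτ.le _)
  calc _ ≤ τ * ∑ n ∈ Finset.Icc 1 N,
        c ^ p * τ ^ (p * s - 1) * ∫ q in I n ×ˢ I n, gagliardoIntegrand p s v q := by
        gcongr with n hn
        exact hcell n hn
    _ = c ^ p * τ ^ (p * s) *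
          ∑ n ∈ Finset.Icc 1 N, ∫ q in I n ×ˢ I n, gagliardoIntegrand p s v q := by
        rw [← Finset.mul_sum, ← mul_assoc, mul_left_comm, mul_comm τ, ← rpow_add_one hτ.ne',
          sub_add_cancel]
    _ ≤ _ := mul_le_mul_of_nonneg_left hcells hc

theorem stmt_15_general (s p : ℝ) (hp : 1 < p) (hs1 : 1 / p < s) :
    ∃ c > 0, ∀ (T : ℝ) (N : ℕ) (τ : ℝ) (v : ℝ → ℝ),
      0 < T → 0 < N → τ = T / N →
      ContinuousOn v (Set.Icc 0 T) →
      IntegrableOn (fun q : ℝ × ℝ => |v q.1 - v q.2| ^ p / |q.1 - q.2| ^ (1 + p * s))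
        (Set.Ioc 0 T ×ˢ Set.Ioc 0 T) →
      (τ * ∑ n ∈ Finset.Icc 1 N,
          |v ((n : ℝ) * τ) -
            (1 / τ) * ∫ t in Set.Ioc (((n : ℝ) - 1) * τ) ((n : ℝ) * τ), v t| ^ p) ^ (1 / p) ≤
        c * τ ^ s *
          (∫ q in Set.Ioc 0 T ×ˢ Set.Ioc 0 T,
            |v q.1 - v q.2| ^ p / |q.1 - q.2| ^ (1 + p * s)) ^ (1 / p) := by
  refine ⟨poincareConstant p s, poincareConstant_pos hs1, fun T N τ v hT hN hτ hv hf ↦ ?_⟩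
  have hτ0 : 0 < τ := hτ ▸ div_pos hT (Nat.cast_pos.2 hN)
  obtain rfl : T = N * τ := by rw [hτ]; field_simp
  have hsum := sum_abs_sub_setAverage_Ioc_rpow_le hp.le hs1 hτ0 N hv hf
  have hA : 0 ≤ ∫ q in Set.Ioc 0 (N * τ) ×ˢ Set.Ioc 0 (N * τ), gagliardoIntegrand p s v q :=
    setIntegral_nonneg_of_ae (.of_forall (gagliardoIntegrand_nonneg p s v))
  have hc := (poincareConstant_pos hs1).le
  have havg : ∀ n : ℕ, ⨍ x in Set.Ioc (((n : ℝ) - 1) * τ) (n * τ), v x =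
      1 / τ * ∫ x in Set.Ioc (((n : ℝ) - 1) * τ) (n * τ), v x := fun n ↦ by
    rw [setAverage_Ioc_eq (by linarith), show (n : ℝ) * τ - ((n : ℝ) - 1) * τ = τ by ring]
  simp only [havg] at hsum
  calc _ ≤ (poincareConstant p s ^ p * τ ^ (p * s) *
        ∫ q in Set.Ioc 0 (N * τ) ×ˢ Set.Ioc 0 (N * τ), gagliardoIntegrand p s v q) ^ (1 / p) := by
        gcongr
    _ = _ := by
        rw [mul_rpow (by positivity) hA, mul_rpow (by positivity) (by positivity),
          ← rpow_mul hc, ← rpow_mul hτ0.le, mul_one_div_cancel (by linarith), rpow_one,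
          mul_one_div, mul_div_cancel_left₀ s (by linarith)]
        rfl

theorem stmt_15 (s p : ℝ) (hp : 1 < p) (hs1 : 1 / p < s) (hs2 : s < 1) :
    ∃ c > 0, ∀ (T : ℝ) (N : ℕ) (τ : ℝ) (v : ℝ → ℝ),
      0 < T → 0 < N → τ = T / N →
      ContinuousOn v (Set.Icc 0 T) →
      IntegrableOn (fun q : ℝ × ℝ => |v q.1 - v q.2| ^ p / |q.1 - q.2| ^ (1 + p * s))
        (Set.Ioc 0 T ×ˢ Set.Ioc 0 T) →
      (τ * ∑ n ∈ Finset.Icc 1 N,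
          |v ((n : ℝ) * τ) -
            (1 / τ) * ∫ t in Set.Ioc (((n : ℝ) - 1) * τ) ((n : ℝ) * τ), v t| ^ p) ^ (1 / p) ≤
        c * τ ^ s *
          (∫ q in Set.Ioc 0 T ×ˢ Set.Ioc 0 T,
            |v q.1 - v q.2| ^ p / |q.1 - q.2| ^ (1 + p * s)) ^ (1 / p) :=
  stmt_15_general s p hp hs1
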